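/- arXiv:2507.16675 — 2 statements merged into one kernel-verified Lean document; each statement's English description precedes it below -/
import Mathlib

section
/- Let f belong to F^coord_{0,L}(ℝ^d). Then for every block index ℓ ∈ {1,…,p} and all x₁, x₂ ∈ ℝ^d, the quadratic lower bound holds: f(x₂) ≥ f(x₁) + ⟨∇f(x₁), x₂ − x₁⟩ + (1/(2L_ℓ))‖∇^{(ℓ)} f(x₁) − ∇^{(ℓ)} f(x₂)‖². -/
open RealInnerProductSpace

noncomputable section

/-- The `ℓ`-th block `ℝ^{d_ℓ}` of the decomposition `ℝ^d = ℝ^{d_1} × … × ℝ^{d_p}`. -/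
abbrev Blk {p : ℕ} (d : Fin p → ℕ) (ℓ : Fin p) : Type := EuclideanSpace ℝ (Fin (d ℓ))

/-- The space `ℝ^d = ℝ^{d_1} × … × ℝ^{d_p}` with the Euclidean (ℓ²) norm. -/
abbrev Sp {p : ℕ} (d : Fin p → ℕ) : Type := PiLp 2 (Blk d)

/-- The selection embedding `U_ℓ : ℝ^{d_ℓ} → ℝ^d` placing `h` in block `ℓ` and `0` elsewhere. -/
def inj {p : ℕ} (d : Fin p → ℕ) (ℓ : Fin p) (h : Blk d ℓ) : Sp d :=
  (WithLp.equiv 2 (∀ ℓ, Blk d ℓ)).symm (Pi.single ℓ h)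

/-- Membership in the class `F^coord_{0,L}(ℝ^d)`: convex, differentiable, and for each block
`ℓ` the partial gradient `∇^{(ℓ)} f` is `L_ℓ`-Lipschitz along the block `ℓ`. -/
def IsCoordSmooth {p : ℕ} (d : Fin p → ℕ) (L : Fin p → ℝ) (f : Sp d → ℝ) : Prop :=
  ConvexOn ℝ Set.univ f ∧ Differentiable ℝ f ∧
    ∀ (ℓ : Fin p) (x : Sp d) (h : Blk d ℓ),
      ‖gradient f (x + inj d ℓ h) ℓ - gradient f x ℓ‖ ≤ L ℓ * ‖h‖

/-!
The block descent lemma bounds `f (x₂ + U_ℓ h)` from above by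
`f x₂ + ⟪∇^{(ℓ)} f x₂, h⟫ + L_ℓ / 2 * ‖h‖²`, while convexity bounds it from below by
`f x₁ + ⟪∇f x₁, x₂ + U_ℓ h - x₁⟫`. Comparing the two bounds at the step
`h = (∇^{(ℓ)} f x₁ - ∇^{(ℓ)} f x₂) / L_ℓ` gives the claim.
-/

open Set

section InnerProductSpace

variable {E : Type*} [NormedAddCommGroup E] [InnerProductSpace ℝ E] [CompleteSpace E]

theorem HasGradientAt.hasDerivAt_comp_add_smul {f : E → ℝ} {g x v : E} {t : ℝ}
    (hf : HasGradientAt f g (x + t • v)) :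
    HasDerivAt (fun s : ℝ => f (x + s • v)) ⟪g, v⟫ t := by
  have hline : HasDerivAt (fun s : ℝ => x + s • v) v t := by
    simpa using ((hasDerivAt_id t).smul_const v).const_add x
  exact hf.hasFDerivAt.comp_hasDerivAt t hline

theorem ConvexOn.add_inner_le_of_hasGradientAt {s : Set E} {f : E → ℝ} {g x y : E}
    (hconv : ConvexOn ℝ s f) (hx : x ∈ s) (hy : y ∈ s) (hf : HasGradientAt f g x) :
    f x + ⟪g, y - x⟫ ≤ f y := by
  let line : ℝ →ᵃ[ℝ] E := AffineMap.lineMap x y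
  have h0 : line 0 = x := AffineMap.lineMap_apply_zero x y
  have h1 : line 1 = y := AffineMap.lineMap_apply_one x y
  have hline : ConvexOn ℝ (line ⁻¹' s) (f ∘ line) := hconv.comp_affineMap line
  have hderiv : HasDerivAt (f ∘ line) ⟪g, y - x⟫ 0 := by
    have hf' : HasFDerivAt f (InnerProductSpace.toDual ℝ E g) (line 0) := h0 ▸ hf.hasFDerivAt
    exact hf'.comp_hasDerivAt 0 AffineMap.hasDerivAt_lineMap
  have hslope := hline.le_slope_of_hasDerivAt (by simpa [h0] using hx) (by simpa [h1] using hy)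
    one_pos hderiv
  simp only [slope_def_field, Function.comp_apply, h1, h0, sub_zero, div_one] at hslope
  linarith

end InnerProductSpace

theorem image_le_of_deriv_sub_le_mul_sub {φ φ' : ℝ → ℝ} {a b M : ℝ} (hab : a ≤ b)
    (hφ : ∀ t ∈ Icc a b, HasDerivAt φ (φ' t) t)
    (hφ' : ∀ t ∈ Ico a b, φ' t - φ' a ≤ M * (t - a)) :
    φ b ≤ φ a + φ' a * (b - a) + M / 2 * (b - a) ^ 2 := by
  have hbound : ∀ t, HasDerivAt (fun t => φ a + φ' a * (t - a) + M / 2 * (t - a) ^ 2)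
      (φ' a + M * (t - a)) t := by
    intro t
    have h := (hasDerivAt_id' t).sub_const a
    refine (((h.const_mul (φ' a)).const_add (φ a)).fun_add
      ((h.fun_pow 2).const_mul (M / 2))).congr_deriv ?_
    simp only [mul_one, Nat.cast_ofNat, Nat.add_one_sub_one, pow_one, add_right_inj]
    ring
  exact image_le_of_deriv_right_le_deriv_boundary
    (fun t ht => (hφ t ht).continuousAt.continuousWithinAt)
    (fun t ht => (hφ t (Ico_subset_Icc_self ht)).hasDerivWithinAt) (by simp)
    (fun t _ => (hbound t).continuousAt.continuousWithinAt)
    (fun t _ => (hbound t).hasDerivWithinAt) (fun t ht => by linarith [hφ' t ht])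
    (right_mem_Icc.2 hab)

section Blocks

variable {p : ℕ} {d : Fin p → ℕ}

theorem inj_smul (ℓ : Fin p) (t : ℝ) (h : Blk d ℓ) : inj d ℓ (t • h) = t • inj d ℓ h := by
  ext i
  simp [inj, Pi.single_smul]

theorem inner_inj_right (ℓ : Fin p) (g : Sp d) (h : Blk d ℓ) : ⟪g, inj d ℓ h⟫ = ⟪g ℓ, h⟫ := by
  rw [PiLp.inner_apply, Finset.sum_eq_single ℓ (fun i _ hi => by simp [inj, hi]) (by simp)]
  simp [inj]

theorem block_descent {f : Sp d → ℝ} {ℓ : Fin p} {L : ℝ} {x : Sp d} (hf : Differentiable ℝ f)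
    (hlip : ∀ h : Blk d ℓ, ‖gradient f (x + inj d ℓ h) ℓ - gradient f x ℓ‖ ≤ L * ‖h‖)
    (h : Blk d ℓ) :
    f (x + inj d ℓ h) ≤ f x + ⟪gradient f x ℓ, h⟫ + L / 2 * ‖h‖ ^ 2 := by
  let φ' : ℝ → ℝ := fun t => ⟪gradient f (x + t • inj d ℓ h) ℓ, h⟫
  have hφ (t : ℝ) : HasDerivAt (fun s : ℝ => f (x + s • inj d ℓ h)) (φ' t) t := by
    simp only [φ', ← inner_inj_right]
    exact (hf _).hasGradientAt.hasDerivAt_comp_add_smul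
  have hφ' : ∀ t ∈ Ico (0 : ℝ) 1, φ' t - φ' 0 ≤ L * ‖h‖ ^ 2 * (t - 0) := by
    rintro t ⟨ht, -⟩
    simp only [φ', sub_zero, zero_smul, add_zero]
    rw [← inner_sub_left, ← inj_smul]
    calc ⟪gradient f (x + inj d ℓ (t • h)) ℓ - gradient f x ℓ, h⟫
        ≤ ‖gradient f (x + inj d ℓ (t • h)) ℓ - gradient f x ℓ‖ * ‖h‖ := real_inner_le_norm _ _
      _ ≤ L * ‖t • h‖ * ‖h‖ := by gcongr; exact hlip _
      _ = L * ‖h‖ ^ 2 * t := by rw [norm_smul, Real.norm_of_nonneg ht]; ring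
  simpa [φ', div_mul_eq_mul_div] using
    image_le_of_deriv_sub_le_mul_sub zero_le_one (fun t _ => hφ t) hφ'

end Blocks

theorem block_quadratic_lower_bound_general {p : ℕ} {d : Fin p → ℕ} (L : Fin p → ℝ)
    (f : Sp d → ℝ) (hf : IsCoordSmooth d L f) :
    ∀ (ℓ : Fin p) (x₁ x₂ : Sp d),
      f x₂ ≥ f x₁ + ⟪gradient f x₁, x₂ - x₁⟫
        + 1 / (2 * L ℓ) * ‖gradient f x₁ ℓ - gradient f x₂ ℓ‖ ^ 2 := by
  obtain ⟨hconv, hdiff, hlip⟩ := hf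
  intro ℓ x₁ x₂
  set δ := gradient f x₁ ℓ - gradient f x₂ ℓ
  set h : Blk d ℓ := (L ℓ)⁻¹ • δ
  have hupper := block_descent hdiff (hlip ℓ x₂) h
  have hlower := hconv.add_inner_le_of_hasGradientAt (mem_univ x₁) (mem_univ (x₂ + inj d ℓ h))
    (hdiff x₁).hasGradientAt
  have hsplit : ⟪gradient f x₁, x₂ + inj d ℓ h - x₁⟫ =
      ⟪gradient f x₁, x₂ - x₁⟫ + ⟪gradient f x₁ ℓ, h⟫ := by
    rw [add_sub_right_comm, inner_add_right, inner_inj_right]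
  have hgap : ⟪gradient f x₁ ℓ, h⟫ - ⟪gradient f x₂ ℓ, h⟫ - L ℓ / 2 * ‖h‖ ^ 2 =
      1 / (2 * L ℓ) * ‖δ‖ ^ 2 := by
    rw [← inner_sub_left, real_inner_smul_right, real_inner_self_eq_norm_sq, norm_smul, mul_pow,
      Real.norm_eq_abs, sq_abs]
    by_cases hL : L ℓ = 0
    · simp [hL]
    · field_simp
      ring
  linarith

theorem block_quadratic_lower_bound {p : ℕ} {d : Fin p → ℕ} (L : Fin p → ℝ)
    (hL : ∀ ℓ, 0 < L ℓ) (f : Sp d → ℝ) (hf : IsCoordSmooth d L f) :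
    ∀ (ℓ : Fin p) (x₁ x₂ : Sp d),
      f x₂ ≥ f x₁ + ⟪gradient f x₁, x₂ - x₁⟫
        + 1 / (2 * L ℓ) * ‖gradient f x₁ ℓ - gradient f x₂ ℓ‖ ^ 2 :=
  block_quadratic_lower_bound_general L f hf
end
end

section
/- Let f : ℝ^d → ℝ be differentiable and suppose that for every block ℓ ∈ {1,…,p} and all x₁, x₂ ∈ ℝ^d: f(x₂) ≥ f(x₁) + ⟨∇f(x₁), x₂ − x₁⟩ + (1/(2L_ℓ))‖∇^{(ℓ)} f(x₁) − ∇^{(ℓ)} f(x₂)‖². Then f belongs to F^coord_{0,L}(ℝ^d); that is, f is convex and for every ℓ, every x ∈ ℝ^d and every h ∈ ℝ^{d_ℓ}: ‖∇^{(ℓ)} f(x + U_ℓ h) − ∇^{(ℓ)} f(x)‖ ≤ L_ℓ ‖h‖. -/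
open RealInnerProductSpace

noncomputable section

/-!
Dropping the nonnegative quadratic term, the hypothesis is the first-order (supporting
hyperplane) inequality, which gives convexity. Adding the hypothesis for the pairs `(x, y)` and
`(y, x)` with `y = x + U_ℓ h` cancels the function values and gives the block co-coercivity
`‖Δ‖² ≤ L_ℓ ⟪Δ, h⟫` for `Δ = ∇^{(ℓ)} f(y) - ∇^{(ℓ)} f(x)`, whence `‖Δ‖ ≤ L_ℓ ‖h‖` by
Cauchy–Schwarz.
-/

theorem PiLp.inner_toLp_single_right {ι : Type*} [Fintype ι] [DecidableEq ι] {β : ι → Type*}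
    [∀ i, NormedAddCommGroup (β i)] [∀ i, InnerProductSpace ℝ (β i)]
    (v : PiLp 2 β) (i : ι) (a : β i) : ⟪v, WithLp.toLp 2 (Pi.single i a)⟫ = ⟪v i, a⟫ := by
  rw [PiLp.inner_apply, Finset.sum_eq_single i (fun j _ hj => by simp [Pi.single_eq_of_ne hj])
    (by simp)]
  simp

section FirstOrder

variable {E : Type*} [NormedAddCommGroup E] [InnerProductSpace ℝ E]

theorem convexOn_univ_of_le_add_inner {f : E → ℝ} {g : E → E}
    (hg : ∀ x y, f x + ⟪g x, y - x⟫ ≤ f y) : ConvexOn ℝ Set.univ f := by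
  refine ⟨convex_univ, fun x _ y _ a b ha hb hab => ?_⟩
  set z := a • x + b • y
  have hcancel : a * ⟪g z, x - z⟫ + b * ⟪g z, y - z⟫ = 0 := by
    rw [← real_inner_smul_right, ← real_inner_smul_right, ← inner_add_right]
    have : a • (x - z) + b • (y - z) = (1 - (a + b)) • z := by simp only [z]; module
    rw [this, hab, sub_self, zero_smul, inner_zero_right]
  have hx := mul_le_mul_of_nonneg_left (hg z x) ha
  have hy := mul_le_mul_of_nonneg_left (hg z y) hb
  have hz : f z = (a + b) * f z := by rw [hab, one_mul]
  simp only [smul_eq_mul]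
  linarith

theorem norm_le_mul_norm_of_sq_le_mul_inner {u v : E} {L : ℝ} (hL : 0 ≤ L)
    (h : ‖u‖ ^ 2 ≤ L * ⟪u, v⟫) : ‖u‖ ≤ L * ‖v‖ := by
  rcases (norm_nonneg u).eq_or_lt with hu | hu
  · rw [← hu]; positivity
  · refine le_of_mul_le_mul_right ?_ hu
    calc ‖u‖ * ‖u‖ = ‖u‖ ^ 2 := (sq _).symm
      _ ≤ L * ⟪u, v⟫ := h
      _ ≤ L * (‖u‖ * ‖v‖) := mul_le_mul_of_nonneg_left (real_inner_le_norm u v) hL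
      _ = L * ‖v‖ * ‖u‖ := by ring

end FirstOrder

section BlockLowerBound

variable {p : ℕ} {d : Fin p → ℕ} {L : Fin p → ℝ} {f : Sp d → ℝ}

theorem inner_inj (v : Sp d) (ℓ : Fin p) (h : Blk d ℓ) : ⟪v, inj d ℓ h⟫ = ⟪v ℓ, h⟫ :=
  PiLp.inner_toLp_single_right v ℓ h

theorem le_add_inner_gradient_of_lower_bound (hL : ∀ ℓ, 0 < L ℓ)
    (hlower : ∀ (ℓ : Fin p) (x₁ x₂ : Sp d),
      f x₂ ≥ f x₁ + ⟪gradient f x₁, x₂ - x₁⟫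
        + 1 / (2 * L ℓ) * ‖gradient f x₁ ℓ - gradient f x₂ ℓ‖ ^ 2)
    (x y : Sp d) : f x + ⟪gradient f x, y - x⟫ ≤ f y := by
  cases isEmpty_or_nonempty (Fin p) with
  | inl _ => simp [Subsingleton.elim x y]
  | inr hp =>
    obtain ⟨ℓ⟩ := hp
    have := hL ℓ
    have : 0 ≤ 1 / (2 * L ℓ) * ‖gradient f x ℓ - gradient f y ℓ‖ ^ 2 := by positivity
    linarith [hlower ℓ x y]

theorem sq_norm_gradient_sub_le_mul_inner {ℓ : Fin p} (hL : 0 < L ℓ)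
    (hlower : ∀ x₁ x₂ : Sp d,
      f x₂ ≥ f x₁ + ⟪gradient f x₁, x₂ - x₁⟫
        + 1 / (2 * L ℓ) * ‖gradient f x₁ ℓ - gradient f x₂ ℓ‖ ^ 2)
    (x : Sp d) (h : Blk d ℓ) :
    ‖gradient f (x + inj d ℓ h) ℓ - gradient f x ℓ‖ ^ 2
      ≤ L ℓ * ⟪gradient f (x + inj d ℓ h) ℓ - gradient f x ℓ, h⟫ := by
  set y := x + inj d ℓ h
  have hyx : y - x = inj d ℓ h := add_sub_cancel_left x _
  have hxy : x - y = -inj d ℓ h := by rw [← neg_sub, hyx]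
  have hxy_le := hlower x y
  have hyx_le := hlower y x
  rw [hyx, inner_inj] at hxy_le
  rw [hxy, inner_neg_right, inner_inj] at hyx_le
  rw [norm_sub_rev] at hxy_le
  calc _ = L ℓ * (2 * (1 / (2 * L ℓ)) * ‖gradient f y ℓ - gradient f x ℓ‖ ^ 2) := by
        field_simp
    _ ≤ _ := mul_le_mul_of_nonneg_left (by rw [inner_sub_left]; linarith) hL.le

end BlockLowerBound

theorem mem_coordSmooth_of_lower_bound {p : ℕ} {d : Fin p → ℕ}
    (L : Fin p → ℝ) (hL : ∀ ℓ, 0 < L ℓ) (f : Sp d → ℝ) (hdiff : Differentiable ℝ f)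
    (hlower : ∀ (ℓ : Fin p) (x₁ x₂ : Sp d),
      f x₂ ≥ f x₁ + ⟪gradient f x₁, x₂ - x₁⟫
        + 1 / (2 * L ℓ) * ‖gradient f x₁ ℓ - gradient f x₂ ℓ‖ ^ 2) :
    IsCoordSmooth d L f :=
  ⟨convexOn_univ_of_le_add_inner (le_add_inner_gradient_of_lower_bound hL hlower), hdiff,
    fun ℓ x h => norm_le_mul_norm_of_sq_le_mul_inner (hL ℓ).le
      (sq_norm_gradient_sub_le_mul_inner (hL ℓ) (hlower ℓ) x h)⟩
end
end
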